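/- Let f, g : [0,1]^K → ℝ with f being L_f-Lipschitz, and suppose there exists y ∈ [0,1]^K with g(y) ≤ 0. For α > 0, define h(x) = f(x) + ((α + L_f·√K)/α)·max(0, g(x)). Then for every x' ∈ [0,1]^K with h(x') ≤ min_{x ∈ [0,1]^K} h(x) + α, we have f(x') ≤ min_{x ∈ [0,1]^K : g(x) ≤ 0} f(x) + α and g(x') ≤ α. -/

import Mathlib

/-!
Exact penalty: on the feasible set the penalty vanishes, so a near-minimizer of `h` nearly
minimizes `f` there. For the constraint, compare `x'` with a feasible `y`: the penalty term
`G · max 0 (g x')` is at most `f y - f x' + α ≤ L_f √K + α = G α`, because the unit cube has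
diameter `√K`; dividing by `G` gives `g x' ≤ α`.
-/

open Set

section ExactPenalty

variable {X : Type*}

def penalized (f g : X → ℝ) (G : ℝ) (x : X) : ℝ := f x + G * max 0 (g x)

variable {f g : X → ℝ} {G α M : ℝ} {x x' : X}

theorem le_add_of_penalized_le (hG : 0 ≤ G) (hgx : g x ≤ 0)
    (hopt : penalized f g G x' ≤ penalized f g G x + α) : f x' ≤ f x + α := by
  have hpen : 0 ≤ G * max 0 (g x') := mul_nonneg hG (le_max_left _ _)
  simp only [penalized, max_eq_left hgx, mul_zero] at hopt
  linarith

theorem le_of_penalized_le (hα : 0 < α) (hM : 0 ≤ M) (hgx : g x ≤ 0) (hosc : f x - f x' ≤ M)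
    (hopt : penalized f g ((α + M) / α) x' ≤ penalized f g ((α + M) / α) x + α) :
    g x' ≤ α := by
  simp only [penalized, max_eq_left hgx, mul_zero] at hopt
  have hpen : (α + M) / α * max 0 (g x') ≤ (α + M) / α * α := by
    rw [div_mul_cancel₀ _ hα.ne']
    linarith
  exact (le_max_right _ _).trans (le_of_mul_le_mul_left hpen (by positivity))

end ExactPenalty

section UnitCube

variable {ι : Type*} [Fintype ι]

theorem EuclideanSpace.norm_le_sqrt_card (v : EuclideanSpace ℝ ι) (hv : ∀ i, |v i| ≤ 1) :
    ‖v‖ ≤ √(Fintype.card ι) :=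
  calc ‖v‖ = √(∑ i, ‖v i‖ ^ 2) := EuclideanSpace.norm_eq v
    _ ≤ √(∑ _ : ι, 1) := by
      gcongr with i
      simpa only [Real.norm_eq_abs, sq_abs, sq_le_one_iff_abs_le_one] using hv i
    _ = √(Fintype.card ι) := by simp

theorem norm_sub_le_sqrt_card_of_mem_unitCube {x y : EuclideanSpace ℝ ι}
    (hx : ∀ i, x i ∈ Icc (0 : ℝ) 1) (hy : ∀ i, y i ∈ Icc (0 : ℝ) 1) :
    ‖x - y‖ ≤ √(Fintype.card ι) :=
  EuclideanSpace.norm_le_sqrt_card _ fun i =>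
    abs_sub_le_of_nonneg_of_le (hx i).1 (hx i).2 (hy i).1 (hy i).2

theorem nonneg_of_abs_sub_le_mul_norm_sub_of_mem_unitCube [Nonempty ι]
    {f : EuclideanSpace ℝ ι → ℝ} {L : ℝ}
    (hLip : ∀ x ∈ {x : EuclideanSpace ℝ ι | ∀ i, x i ∈ Icc (0 : ℝ) 1},
      ∀ y ∈ {x : EuclideanSpace ℝ ι | ∀ i, x i ∈ Icc (0 : ℝ) 1}, |f x - f y| ≤ L * ‖x - y‖) :
    0 ≤ L := by
  set one : EuclideanSpace ℝ ι := WithLp.toLp 2 fun _ => 1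
  have hne : (0 : EuclideanSpace ℝ ι) - one ≠ 0 := by
    intro h
    simpa [one] using congrArg (· (Classical.arbitrary ι)) h
  have hbound := hLip 0 (fun _ => by simp) one (fun _ => by simp [one])
  exact nonneg_of_mul_nonneg_left ((abs_nonneg _).trans hbound) (norm_pos_iff.2 hne)

end UnitCube

theorem stmt_1_general (K : ℕ) (hK : 0 < K)
    (f g : EuclideanSpace ℝ (Fin K) → ℝ) (Lf α : ℝ)
    (cube : Set (EuclideanSpace ℝ (Fin K)))
    (hcube : cube = {x | ∀ i, x i ∈ Set.Icc (0:ℝ) 1})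
    (hLip : ∀ x ∈ cube, ∀ y ∈ cube, |f x - f y| ≤ Lf * ‖x - y‖)
    (hfeas : ∃ y ∈ cube, g y ≤ 0)
    (hα : 0 < α)
    (h : EuclideanSpace ℝ (Fin K) → ℝ)
    (hh : ∀ x, h x = f x + ((α + Lf * Real.sqrt K) / α) * max 0 (g x))
    (x' : EuclideanSpace ℝ (Fin K)) (hx' : x' ∈ cube)
    (hopt : ∀ x ∈ cube, h x' ≤ h x + α) :
    (∀ x ∈ cube, g x ≤ 0 → f x' ≤ f x + α) ∧ g x' ≤ α := by
  obtain rfl : h = penalized f g ((α + Lf * √K) / α) := funext hh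
  subst hcube
  have : Nonempty (Fin K) := ⟨⟨0, hK⟩⟩
  have hLf : 0 ≤ Lf := nonneg_of_abs_sub_le_mul_norm_sub_of_mem_unitCube hLip
  refine ⟨fun x hx hgx => le_add_of_penalized_le (by positivity) hgx (hopt x hx), ?_⟩
  obtain ⟨y, hy, hgy⟩ := hfeas
  refine le_of_penalized_le hα (by positivity) hgy ?_ (hopt y hy)
  calc f y - f x' ≤ |f x' - f y| := by rw [abs_sub_comm]; exact le_abs_self _
    _ ≤ Lf * ‖x' - y‖ := hLip x' hx' y hy
    _ ≤ Lf * √K := by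
      gcongr
      simpa using norm_sub_le_sqrt_card_of_mem_unitCube hx' hy

/-- Corollary: with `G = (α + L_f·√K)/α`, a near-minimizer of
`h = f + G·max(0,g)` over the cube nearly minimizes `f` over the feasible set
and satisfies `g(x') ≤ α`. -/
theorem stmt_1 (K : ℕ) (hK : 0 < K)
    (f g : EuclideanSpace ℝ (Fin K) → ℝ) (Lf α : ℝ)
    (cube : Set (EuclideanSpace ℝ (Fin K)))
    (hcube : cube = {x | ∀ i, x i ∈ Set.Icc (0:ℝ) 1})
    (hfc : ContinuousOn f cube) (hgc : ContinuousOn g cube)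
    (hLip : ∀ x ∈ cube, ∀ y ∈ cube, |f x - f y| ≤ Lf * ‖x - y‖)
    (hfeas : ∃ y ∈ cube, g y ≤ 0)
    (hα : 0 < α)
    (h : EuclideanSpace ℝ (Fin K) → ℝ)
    (hh : ∀ x, h x = f x + ((α + Lf * Real.sqrt K) / α) * max 0 (g x))
    (x' : EuclideanSpace ℝ (Fin K)) (hx' : x' ∈ cube)
    (hopt : ∀ x ∈ cube, h x' ≤ h x + α) :
    (∀ x ∈ cube, g x ≤ 0 → f x' ≤ f x + α) ∧ g x' ≤ α :=
  stmt_1_general K hK f g Lf α cube hcube hLip hfeas hα h hh x' hx' hopt
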